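/- arXiv:2211.03303 — 5 statements merged into one kernel-verified Lean document; each statement's English description precedes it below -/
import Mathlib

section
/- In the admissible path set \bar{P}_{i,k}, there is exactly one path whose set of corners yields the dominant monomial: precisely, the monomial map m sends the highest path of P_{i,k} (which is admissible) to the single variable Y_{i,k}, and for every other admissible path p, m(p) ≠ Y_{i,k}; in particular m(p) contains at least one negative-power variable Y_{j,ℓ}^{-1}. -/
/-- A path in `𝒫_{i,k}` (type C combinatorics, `N = 2n`): a sequence
`y : ℕ → ℤ` (only the values `y 0, …, y (2n)` matter) with
`y 0 = i + k`, `y (2n) = 2n - i + k`, and unit steps. -/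
def IsPath (n i : ℕ) (k : ℤ) (y : ℕ → ℤ) : Prop :=
  y 0 = (i : ℤ) + k ∧ y (2 * n) = 2 * (n : ℤ) - (i : ℤ) + k ∧
    ∀ r, r < 2 * n → y (r + 1) - y r = 1 ∨ y (r + 1) - y r = -1

/-- Upper corner at position `r`: `y (r-1) = y r + 1 = y (r+1)`. -/
def UpperCorner (y : ℕ → ℤ) (r : ℕ) : Prop :=
  y (r - 1) = y r + 1 ∧ y (r + 1) = y r + 1

/-- Lower corner at position `r`: `y (r-1) = y r - 1 = y (r+1)`. -/
def LowerCorner (y : ℕ → ℤ) (r : ℕ) : Prop :=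
  y (r - 1) = y r - 1 ∧ y (r + 1) = y r - 1

/-- The admissibility condition `ℓ_j ≤ ℓ_{N-j}` for all `j ∈ I = {1,…,n}`. -/
def IsAdmissible (n : ℕ) (y : ℕ → ℤ) : Prop :=
  ∀ s, 1 ≤ s → s ≤ n → y s ≤ y (2 * n - s)

/-- `\bar r = min (r, N - r)`. -/
def bar (n r : ℕ) : ℕ := min r (2 * n - r)

/- The monomial map `𝗆`, recorded as an exponent vector in the free abelian
group `(ℕ × ℤ) →₀ ℤ` on the variables `Y_{a,b}`:
`𝗆(p) = ∏_{(j,ℓ)∈C_{p,+}} Y_{\bar j, ℓ+2δ(j>n)} ∏_{(j,ℓ)∈C_{p,-}} Y_{\bar j, ℓ+2δ(j≥n)}^{-1}`. -/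
open scoped Classical in
noncomputable def mon (n : ℕ) (y : ℕ → ℤ) : (ℕ × ℤ) →₀ ℤ :=
  (∑ r ∈ Finset.Ioo 0 (2 * n),
      if UpperCorner y r then
        Finsupp.single (bar n r, y r + if n < r then 2 else 0) 1 else 0)
  + ∑ r ∈ Finset.Ioo 0 (2 * n),
      if LowerCorner y r then
        Finsupp.single (bar n r, y r + if n ≤ r then 2 else 0) (-1) else 0

/-- The highest path of `𝒫_{i,k}`: descending `i` steps then ascending. -/
def highestPath (i : ℕ) (k : ℤ) : ℕ → ℤ := fun r => k + |(r : ℤ) - (i : ℤ)|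

/-- The lowest path of `𝒫_{i,k}` (the unique path with no upper corners):
ascending (in value) for `N - i` steps, then descending. -/
def lowestPath (n i : ℕ) (k : ℤ) : ℕ → ℤ :=
  fun r => k + 2 * (n : ℤ) - |(r : ℤ) - (2 * (n : ℤ) - (i : ℤ))|

-- AUX START
lemma high_le (i r : ℕ) (k : ℤ) (h : r ≤ i) : highestPath i k r = k + (i : ℤ) - r := by
  unfold highestPath
  rw [abs_of_nonpos (by omega)]
  omega

lemma high_ge (i r : ℕ) (k : ℤ) (h : i ≤ r) : highestPath i k r = k + (r : ℤ) - i := by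
  unfold highestPath
  rw [abs_of_nonneg (by omega)]
  omega

/-- A path with no interior lower corner coincides with the highest path. -/
lemma noLC_eq_highest (n i : ℕ) (k : ℤ) (y : ℕ → ℤ)
    (hn : 1 ≤ n) (hi : i ≤ n) (hy : IsPath n i k y)
    (h : ∀ r, 0 < r → r < 2 * n → ¬ LowerCorner y r) :
    ∀ r, r ≤ 2 * n → y r = highestPath i k r := by
  obtain ⟨h0, hN, hstep⟩ := hy
  have hup : ∀ m, m < 2 * n → y (m + 1) = y m + 1 →
      ∀ d, m + d ≤ 2 * n → y (m + d) = y m + d := by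
    intro m hm h1 d
    induction d using Nat.strong_induction_on with
    | _ d ih =>
      intro hd
      match d, hd with
      | 0, _ => simp
      | 1, _ => simpa using h1
      | (e + 2), hd =>
        have ih1 : y (m + (e + 1)) = y m + (e + 1 : ℕ) := ih (e + 1) (by omega) (by omega)
        have ih0 : y (m + e) = y m + (e : ℕ) := ih e (by omega) (by omega)
        have hnlc := h (m + e + 1) (by omega) (by omega)
        unfold LowerCorner at hnlc
        have hs := hstep (m + e + 1) (by omega)
        have hsub : m + e + 1 - 1 = m + e := by omega
        rw [hsub] at hnlc
        have hbr : y (m + (e + 1)) = y (m + e + 1) := rfl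
        have hne2 : y (m + e + 1 + 1) ≠ y (m + e + 1) - 1 := by
          intro hcon
          refine hnlc ⟨?_, hcon⟩
          push_cast at ih1 ih0 ⊢
          omega
        show y (m + e + 1 + 1) = y m + ((e + 2 : ℕ) : ℤ)
        push_cast at ih1 ⊢
        omega
  have hex : ∃ m, m < 2 * n ∧ y (m + 1) = y m + 1 := by
    by_contra hc
    push_neg at hc
    have hall : ∀ d, d ≤ 2 * n → y d = y 0 - d := by
      intro d
      induction d with
      | zero => intro _; simp
      | succ d ih =>
        intro hd
        have hs := hstep d (by omega)
        have := hc d (by omega)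
        have ihd := ih (by omega)
        push_cast
        omega
    have := hall (2 * n) le_rfl
    rw [hN, h0] at this
    push_cast at this
    omega
  have hspec := Nat.find_spec hex
  have hmin : ∀ t, t < Nat.find hex → ¬(t < 2 * n ∧ y (t + 1) = y t + 1) :=
    fun t ht => Nat.find_min hex ht
  set m := Nat.find hex with hmdef
  obtain ⟨hm, hm1⟩ := hspec
  have hdown : ∀ r, r ≤ m → y r = y 0 - r := by
    intro r
    induction r with
    | zero => intro _; simp
    | succ r ih =>
      intro hr
      have hs := hstep r (by omega)
      have hnot := hmin r (by omega)
      have : ¬ (y (r + 1) = y r + 1) := by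
        intro hcon; exact hnot ⟨by omega, hcon⟩
      have ihd := ih (by omega)
      push_cast
      omega
  have hym : y m = (i : ℤ) + k - m := by
    have := hdown m le_rfl
    omega
  have hupa : ∀ d, m + d ≤ 2 * n → y (m + d) = y m + d := hup m hm hm1
  have hend : y (2 * n) = y m + ((2 * n - m : ℕ) : ℤ) := by
    have he : m + (2 * n - m) = 2 * n := by omega
    have := hupa (2 * n - m) (by omega)
    rwa [he] at this
  have hmi : m = i := by
    rw [hN, hym] at hend
    omega
  subst hmi
  intro r hr
  rcases le_or_gt r m with hrm | hrm
  · rw [hdown r hrm, h0, high_le m r k hrm]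
    omega
  · have he : m + (r - m) = r := by omega
    have := hupa (r - m) (by omega)
    rw [he] at this
    rw [this, hym, high_ge m r k (by omega)]
    omega

/-- No cancellation: an upper corner and a lower corner of an admissible path
never produce the same variable. -/
lemma no_cancel (n : ℕ) (y : ℕ → ℤ) (hadm : IsAdmissible n y)
    (r r' : ℕ) (hr : 0 < r) (hr2 : r < 2 * n) (hr' : 0 < r') (hr'2 : r' < 2 * n)
    (hu : UpperCorner y r) (hl : LowerCorner y r') :
    ((bar n r, y r + if n < r then 2 else 0) : ℕ × ℤ)
      ≠ (bar n r', y r' + if n ≤ r' then 2 else 0) := by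
  intro heq
  rw [Prod.mk.injEq] at heq
  obtain ⟨h1, h2⟩ := heq
  unfold bar at h1
  have hu2 := hu.2
  have hl2 := hl.2
  have hcase : r = r' ∨ r + r' = 2 * n := by omega
  rcases hcase with rfl | hsum
  · omega
  · rcases lt_trichotomy r n with hlt | heqn | hgt
    · have hadm' := hadm r hr (by omega)
      have he : 2 * n - r = r' := by omega
      rw [he] at hadm'
      rw [if_neg (by omega), if_pos (by omega)] at h2
      omega
    · have : r' = r := by omega
      subst this
      omega
    · have hadm' := hadm r' hr' (by omega)
      have he : 2 * n - r' = r := by omega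
      rw [he] at hadm'
      rw [if_pos (by omega), if_neg (by omega)] at h2
      omega
-- AUX END

/-- The highest path is admissible with monomial the single variable `Y_{i,k}`
(the dominant monomial), and every other admissible path has monomial different
from `Y_{i,k}`; in particular its monomial contains a negative power. -/
theorem stmt8 (n i : ℕ) (k : ℤ) (hn : 1 ≤ n) (hi1 : 1 ≤ i) (hi : i ≤ n)
    (hpar : Odd ((i : ℤ) - k)) :
    (IsPath n i k (highestPath i k) ∧ IsAdmissible n (highestPath i k)) ∧
    mon n (highestPath i k) = Finsupp.single (i, k) 1 ∧
    (∀ y, IsPath n i k y → IsAdmissible n y →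
      (¬ ∀ r, r ≤ 2 * n → y r = highestPath i k r) →
      mon n y ≠ Finsupp.single (i, k) 1 ∧ ∃ a b, mon n y (a, b) < 0) := by
  classical
  have hpath : IsPath n i k (highestPath i k) := by
    refine ⟨?_, ?_, ?_⟩
    · rw [high_le i 0 k (by omega)]; omega
    · rw [high_ge i (2 * n) k (by omega)]; push_cast; omega
    · intro r hr
      rcases le_or_gt i r with h | h
      · left
        rw [high_ge i (r + 1) k (by omega), high_ge i r k h]
        push_cast; omega
      · right
        rw [high_le i (r + 1) k (by omega), high_le i r k (by omega)]
        push_cast; omega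
  have hadm : IsAdmissible n (highestPath i k) := by
    intro s h1 h2
    rw [high_ge i (2 * n - s) k (by omega)]
    rcases le_or_gt s i with h | h
    · rw [high_le i s k h]; omega
    · rw [high_ge i s k (by omega)]; omega
  have hmon : mon n (highestPath i k) = Finsupp.single (i, k) 1 := by
    unfold mon
    have hS2 : (∑ r ∈ Finset.Ioo 0 (2 * n),
        if LowerCorner (highestPath i k) r then
          Finsupp.single (bar n r, highestPath i k r + if n ≤ r then 2 else 0) (-1 : ℤ)
        else 0) = 0 := by
      refine Finset.sum_eq_zero fun r hr => ?_
      rw [Finset.mem_Ioo] at hr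
      rw [if_neg]
      intro hl
      obtain ⟨ha, hb⟩ := hl
      rcases lt_trichotomy r i with h | h | h
      · rw [high_le i (r - 1) k (by omega), high_le i r k (by omega)] at ha
        omega
      · rw [high_ge i (r + 1) k (by omega), high_le i r k (by omega)] at hb
        push_cast at hb; omega
      · rw [high_ge i (r + 1) k (by omega), high_ge i r k (by omega)] at hb
        push_cast at hb; omega
    have hS1 : (∑ r ∈ Finset.Ioo 0 (2 * n),
        if UpperCorner (highestPath i k) r then
          Finsupp.single (bar n r, highestPath i k r + if n < r then 2 else 0) (1 : ℤ)
        else 0) = Finsupp.single (i, k) 1 := by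
      rw [Finset.sum_eq_single_of_mem i (Finset.mem_Ioo.mpr ⟨by omega, by omega⟩)]
      · rw [if_pos, high_le i i k le_rfl, if_neg (by omega)]
        · have hb : bar n i = i := by unfold bar; omega
          rw [hb]
          congr 1
          · exact Prod.ext rfl (by omega)
        · constructor
          · rw [high_le i (i - 1) k (by omega), high_le i i k le_rfl]
            omega
          · rw [high_ge i (i + 1) k (by omega), high_le i i k le_rfl]
            push_cast; omega
      · intro r hr hne
        rw [Finset.mem_Ioo] at hr
        rw [if_neg]
        intro hu
        obtain ⟨ha, hb⟩ := hu
        rcases lt_trichotomy r i with h | h | h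
        · rw [high_le i (r + 1) k (by omega), high_le i r k (by omega)] at hb
          push_cast at hb; omega
        · exact hne h
        · rw [high_ge i (r - 1) k (by omega), high_ge i r k (by omega)] at ha
          omega
    rw [hS1, hS2, add_zero]
  refine ⟨⟨hpath, hadm⟩, hmon, ?_⟩
  intro y hy hyadm hne
  have hLC : ∃ r₀, 0 < r₀ ∧ r₀ < 2 * n ∧ LowerCorner y r₀ := by
    by_contra hc
    push_neg at hc
    exact hne (noLC_eq_highest n i k y hn hi hy fun r h1 h2 => hc r h1 h2)
  obtain ⟨r₀, hr₀1, hr₀2, hr₀L⟩ := hLC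
  set a : ℕ := bar n r₀ with hadef
  set b : ℤ := y r₀ + if n ≤ r₀ then 2 else 0 with hbdef
  have hneg : mon n y (a, b) < 0 := by
    unfold mon
    rw [Finsupp.add_apply, Finsupp.finset_sum_apply, Finsupp.finset_sum_apply]
    have hS1 : (∑ r ∈ Finset.Ioo 0 (2 * n),
        (if UpperCorner y r then
          Finsupp.single (bar n r, y r + if n < r then 2 else 0) (1 : ℤ) else 0) (a, b)) = 0 := by
      refine Finset.sum_eq_zero fun r hr => ?_
      rw [Finset.mem_Ioo] at hr
      by_cases hU : UpperCorner y r
      · rw [if_pos hU, Finsupp.single_apply, if_neg]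
        exact no_cancel n y hyadm r r₀ hr.1 hr.2 hr₀1 hr₀2 hU hr₀L
      · rw [if_neg hU]; rfl
    rw [hS1, zero_add]
    have hlt : (∑ r ∈ Finset.Ioo 0 (2 * n),
        (if LowerCorner y r then
          Finsupp.single (bar n r, y r + if n ≤ r then 2 else 0) (-1 : ℤ) else 0) (a, b))
        < ∑ _r ∈ Finset.Ioo 0 (2 * n), (0 : ℤ) := by
      refine Finset.sum_lt_sum (fun r _ => ?_) ⟨r₀, Finset.mem_Ioo.mpr ⟨hr₀1, hr₀2⟩, ?_⟩
      · by_cases hL : LowerCorner y r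
        · rw [if_pos hL, Finsupp.single_apply]
          split_ifs <;> omega
        · rw [if_neg hL]
          exact le_of_eq rfl
      · rw [if_pos hr₀L, Finsupp.single_apply, if_pos rfl]
        omega
    simpa using hlt
  refine ⟨?_, a, b, hneg⟩
  intro heq
  rw [heq, Finsupp.single_apply] at hneg
  split_ifs at hneg <;> omega
end

section
/- The monomial map restricted to admissible paths is injective: for p_1, p_2 ∈ \bar{P}_{i,k}, if m(p_1) = m(p_2) (as elements of the free abelian group on the variables Y_{a,b}), then p_1 = p_2. -/
/-! ### Auxiliary lemmas -/

lemma bar_eq_bar {n r s : ℕ} (hr0 : 0 < r) (hr : r < 2 * n) (hs0 : 0 < s) (hs : s < 2 * n)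
    (h : bar n r = bar n s) : s = r ∨ s = 2 * n - r := by
  unfold bar at h; omega

/-- Within an admissible path, an upper-corner letter never coincides with a
lower-corner letter. -/
lemma letter_ne {n : ℕ} {y : ℕ → ℤ} (ha : IsAdmissible n y) {r s : ℕ}
    (hr0 : 0 < r) (hr : r < 2 * n) (hs0 : 0 < s) (hs : s < 2 * n)
    (hu : UpperCorner y r) (hl : LowerCorner y s) :
    ((bar n r, y r + if n < r then (2 : ℤ) else 0) : ℕ × ℤ)
      ≠ (bar n s, y s + if n ≤ s then (2 : ℤ) else 0) := by
  intro h
  rw [Prod.mk.injEq] at h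
  obtain ⟨h1, h2⟩ := h
  rcases bar_eq_bar hr0 hr hs0 hs h1 with h3 | h3
  · subst h3
    have := hu.2; have := hl.2; omega
  · subst h3
    rcases lt_trichotomy r n with hc | hc | hc
    · have hadm := ha r hr0 (le_of_lt hc)
      split_ifs at h2 <;> omega
    · have hnp : 2 * n - r = r := by omega
      rw [hnp] at h2 hl
      have := hu.2; have := hl.2
      split_ifs at h2 <;> omega
    · have hadm := ha (2 * n - r) (by omega) (by omega)
      have he : 2 * n - (2 * n - r) = r := by omega
      rw [he] at hadm
      split_ifs at h2 <;> omega

open scoped Classical in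
lemma mon_apply (n : ℕ) (y : ℕ → ℤ) (L : ℕ × ℤ) :
    mon n y L =
      (∑ r ∈ Finset.Ioo 0 (2 * n),
        if UpperCorner y r ∧ ((bar n r, y r + if n < r then (2 : ℤ) else 0) : ℕ × ℤ) = L
          then (1 : ℤ) else 0)
      + ∑ r ∈ Finset.Ioo 0 (2 * n),
        if LowerCorner y r ∧ ((bar n r, y r + if n ≤ r then (2 : ℤ) else 0) : ℕ × ℤ) = L
          then (-1 : ℤ) else 0 := by
  have h : mon n y L =
      (∑ r ∈ Finset.Ioo 0 (2 * n),
        (if UpperCorner y r then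
          Finsupp.single ((bar n r, y r + if n < r then (2 : ℤ) else 0) : ℕ × ℤ) (1 : ℤ)
         else 0) L)
      + ∑ r ∈ Finset.Ioo 0 (2 * n),
        (if LowerCorner y r then
          Finsupp.single ((bar n r, y r + if n ≤ r then (2 : ℤ) else 0) : ℕ × ℤ) (-1 : ℤ)
         else 0) L := by
    rw [mon, Finsupp.add_apply, Finset.sum_apply', Finset.sum_apply']
  rw [h]
  congr 1 <;> refine Finset.sum_congr rfl fun r _ => ?_
  · by_cases h1 : UpperCorner y r
    · rw [if_pos h1, Finsupp.single_apply]
      by_cases h2 : ((bar n r, y r + if n < r then (2 : ℤ) else 0) : ℕ × ℤ) = L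
      · rw [if_pos h2, if_pos ⟨h1, h2⟩]
      · rw [if_neg h2, if_neg (fun hc => h2 hc.2)]
    · rw [if_neg h1, if_neg (fun hc => h1 hc.1), Finsupp.coe_zero, Pi.zero_apply]
  · by_cases h1 : LowerCorner y r
    · rw [if_pos h1, Finsupp.single_apply]
      by_cases h2 : ((bar n r, y r + if n ≤ r then (2 : ℤ) else 0) : ℕ × ℤ) = L
      · rw [if_pos h2, if_pos ⟨h1, h2⟩]
      · rw [if_neg h2, if_neg (fun hc => h2 hc.2)]
    · rw [if_neg h1, if_neg (fun hc => h1 hc.1), Finsupp.coe_zero, Pi.zero_apply]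

open scoped Classical in
/-- An upper corner of `y₁` transfers, through equality of monomials, to an
upper corner of `y₂` with the same letter. -/
lemma transfer_upper {n : ℕ} {y₁ y₂ : ℕ → ℤ} (ha₁ : IsAdmissible n y₁)
    (hm : mon n y₁ = mon n y₂) {r : ℕ} (hr0 : 0 < r) (hr : r < 2 * n)
    (hu : UpperCorner y₁ r) :
    ∃ s, 0 < s ∧ s < 2 * n ∧ UpperCorner y₂ s ∧
      ((bar n s, y₂ s + if n < s then (2 : ℤ) else 0) : ℕ × ℤ)
        = (bar n r, y₁ r + if n < r then (2 : ℤ) else 0) := by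
  set L : ℕ × ℤ := (bar n r, y₁ r + if n < r then (2 : ℤ) else 0) with hL
  have hmem : r ∈ Finset.Ioo 0 (2 * n) := Finset.mem_Ioo.mpr ⟨hr0, hr⟩
  have h1 : (1 : ℤ) ≤ mon n y₁ L := by
    rw [mon_apply]
    have hlow : (∑ s ∈ Finset.Ioo 0 (2 * n),
        if LowerCorner y₁ s ∧ ((bar n s, y₁ s + if n ≤ s then (2 : ℤ) else 0) : ℕ × ℤ) = L
          then (-1 : ℤ) else 0) = 0 := by
      refine Finset.sum_eq_zero fun s hs => ?_
      rw [Finset.mem_Ioo] at hs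
      rw [if_neg]
      rintro ⟨hls, hEq⟩
      exact letter_ne ha₁ hr0 hr hs.1 hs.2 hu hls (hL ▸ hEq.symm)
    have hup : (1 : ℤ) ≤ ∑ s ∈ Finset.Ioo 0 (2 * n),
        if UpperCorner y₁ s ∧ ((bar n s, y₁ s + if n < s then (2 : ℤ) else 0) : ℕ × ℤ) = L
          then (1 : ℤ) else 0 := by
      have h0 : ∀ s ∈ Finset.Ioo 0 (2 * n), (0 : ℤ) ≤
          if UpperCorner y₁ s ∧ ((bar n s, y₁ s + if n < s then (2 : ℤ) else 0) : ℕ × ℤ) = L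
            then (1 : ℤ) else 0 := fun s _ => by split_ifs <;> norm_num
      have := Finset.single_le_sum h0 hmem
      rwa [if_pos ⟨hu, hL.symm⟩] at this
    linarith
  rw [hm] at h1
  by_contra hcon
  push_neg at hcon
  have h2 : mon n y₂ L ≤ 0 := by
    rw [mon_apply]
    have hup0 : (∑ s ∈ Finset.Ioo 0 (2 * n),
        if UpperCorner y₂ s ∧ ((bar n s, y₂ s + if n < s then (2 : ℤ) else 0) : ℕ × ℤ) = L
          then (1 : ℤ) else 0) = 0 := by
      refine Finset.sum_eq_zero fun s hs => ?_
      rw [Finset.mem_Ioo] at hs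
      rw [if_neg]
      rintro ⟨hus, hEq⟩
      exact hcon s hs.1 hs.2 hus hEq
    have hlow0 : (∑ s ∈ Finset.Ioo 0 (2 * n),
        if LowerCorner y₂ s ∧ ((bar n s, y₂ s + if n ≤ s then (2 : ℤ) else 0) : ℕ × ℤ) = L
          then (-1 : ℤ) else 0) ≤ 0 :=
      Finset.sum_nonpos fun s _ => by split_ifs <;> norm_num
    linarith
  linarith

open scoped Classical in
/-- A lower corner of `y₁` transfers, through equality of monomials, to a
lower corner of `y₂` with the same letter. -/
lemma transfer_lower {n : ℕ} {y₁ y₂ : ℕ → ℤ} (ha₁ : IsAdmissible n y₁)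
    (hm : mon n y₁ = mon n y₂) {r : ℕ} (hr0 : 0 < r) (hr : r < 2 * n)
    (hl : LowerCorner y₁ r) :
    ∃ s, 0 < s ∧ s < 2 * n ∧ LowerCorner y₂ s ∧
      ((bar n s, y₂ s + if n ≤ s then (2 : ℤ) else 0) : ℕ × ℤ)
        = (bar n r, y₁ r + if n ≤ r then (2 : ℤ) else 0) := by
  set L : ℕ × ℤ := (bar n r, y₁ r + if n ≤ r then (2 : ℤ) else 0) with hL
  have hmem : r ∈ Finset.Ioo 0 (2 * n) := Finset.mem_Ioo.mpr ⟨hr0, hr⟩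
  have h1 : mon n y₁ L ≤ -1 := by
    rw [mon_apply]
    have hup : (∑ s ∈ Finset.Ioo 0 (2 * n),
        if UpperCorner y₁ s ∧ ((bar n s, y₁ s + if n < s then (2 : ℤ) else 0) : ℕ × ℤ) = L
          then (1 : ℤ) else 0) = 0 := by
      refine Finset.sum_eq_zero fun s hs => ?_
      rw [Finset.mem_Ioo] at hs
      rw [if_neg]
      rintro ⟨hus, hEq⟩
      exact letter_ne ha₁ hs.1 hs.2 hr0 hr hus hl (hEq.trans hL)
    have hlow : (∑ s ∈ Finset.Ioo 0 (2 * n),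
        if LowerCorner y₁ s ∧ ((bar n s, y₁ s + if n ≤ s then (2 : ℤ) else 0) : ℕ × ℤ) = L
          then (-1 : ℤ) else 0) ≤ -1 := by
      rw [← Finset.add_sum_erase _ _ hmem, if_pos ⟨hl, hL.symm⟩]
      have : (∑ s ∈ (Finset.Ioo 0 (2 * n)).erase r,
          if LowerCorner y₁ s ∧ ((bar n s, y₁ s + if n ≤ s then (2 : ℤ) else 0) : ℕ × ℤ) = L
            then (-1 : ℤ) else 0) ≤ 0 :=
        Finset.sum_nonpos fun s _ => by split_ifs <;> norm_num
      linarith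
    linarith
  rw [hm] at h1
  by_contra hcon
  push_neg at hcon
  have h2 : (0 : ℤ) ≤ mon n y₂ L := by
    rw [mon_apply]
    have hlow0 : (∑ s ∈ Finset.Ioo 0 (2 * n),
        if LowerCorner y₂ s ∧ ((bar n s, y₂ s + if n ≤ s then (2 : ℤ) else 0) : ℕ × ℤ) = L
          then (-1 : ℤ) else 0) = 0 := by
      refine Finset.sum_eq_zero fun s hs => ?_
      rw [Finset.mem_Ioo] at hs
      rw [if_neg]
      rintro ⟨hls, hEq⟩
      exact hcon s hs.1 hs.2 hls hEq
    have hup0 : (0 : ℤ) ≤ ∑ s ∈ Finset.Ioo 0 (2 * n),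
        if UpperCorner y₂ s ∧ ((bar n s, y₂ s + if n < s then (2 : ℤ) else 0) : ℕ × ℤ) = L
          then (1 : ℤ) else 0 :=
      Finset.sum_nonneg fun s _ => by split_ifs <;> norm_num
    linarith
  linarith

/-- A run of descending steps computes values. -/
lemma desc_run {y : ℕ → ℤ} {a : ℕ} :
    ∀ b, a ≤ b → (∀ r, a ≤ r → r < b → y (r + 1) = y r - 1) →
      y b = y a - ((b : ℤ) - (a : ℤ)) := by
  intro b hab
  induction b, hab using Nat.le_induction with
  | base => intro _; simp
  | succ m hm ih =>
    intro hstep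
    have h1 := ih (fun r hr1 hr2 => hstep r hr1 (by omega))
    have h2 := hstep m hm (by omega)
    push_cast at h1 ⊢
    omega

/-- Lower bound for values along a path, starting from position 1. -/
lemma lb_run {n : ℕ} {y : ℕ → ℤ}
    (hstep : ∀ r, r < 2 * n → y (r + 1) - y r = 1 ∨ y (r + 1) - y r = -1) :
    ∀ m, 1 ≤ m → m ≤ 2 * n → y 1 - ((m : ℤ) - 1) ≤ y m := by
  intro m h1
  induction m, h1 using Nat.le_induction with
  | base => intro _; simp
  | succ m hm ih =>
    intro h2
    have h3 := hstep m (by omega)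
    have h4 := ih (by omega)
    push_cast at h4 ⊢
    omega

/-- The key step: if two admissible paths with the same monomial agree strictly
below `r₀` but `y₁` steps down and `y₂` steps up at `r₀`, we get a
contradiction. -/
lemma key (n i : ℕ) (k : ℤ) (hn : 1 ≤ n) (hi : i ≤ n)
    (y₁ y₂ : ℕ → ℤ) (h₁ : IsPath n i k y₁) (ha₁ : IsAdmissible n y₁)
    (h₂ : IsPath n i k y₂) (ha₂ : IsAdmissible n y₂)
    (hm : mon n y₁ = mon n y₂)
    (r₀ : ℕ) (hr₀ : 0 < r₀) (hr₀' : r₀ < 2 * n)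
    (hagree : ∀ m, m < r₀ → y₁ m = y₂ m)
    (hdown : y₁ r₀ = y₁ (r₀ - 1) - 1) (hup2 : y₂ r₀ = y₂ (r₀ - 1) + 1) : False := by
  classical
  obtain ⟨e10, e1N, s1⟩ := h₁
  obtain ⟨e20, e2N, s2⟩ := h₂
  rcases Nat.lt_or_ge r₀ 2 with hcase | hcase
  · -- r₀ = 1
    have hr1 : r₀ = 1 := by omega
    subst hr1
    norm_num at hdown hup2
    have hv0 : y₂ 0 = y₁ 0 := by rw [e20, e10]
    -- find the first ascending step of y₁
    have hex : ∃ r, 0 < r ∧ r < 2 * n ∧ y₁ (r + 1) = y₁ r + 1 := by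
      by_contra hno
      push_neg at hno
      have hdesc : y₁ (2 * n) = y₁ 1 - ((2 * n : ℤ) - 1) := by
        refine desc_run (2 * n) (by omega) ?_
        intro r hr1 hr2
        have := s1 r (by omega)
        have hne := hno r (by omega) (by omega)
        omega
      rw [e1N, hdown, e10] at hdesc
      push_cast at hdesc
      omega
    have hPp := Nat.find_spec hex
    set p := Nat.find hex with hpdef
    obtain ⟨hp0, hp2n, hpstep⟩ := hPp
    have hmin : ∀ m, 0 < m → m < p → y₁ (m + 1) = y₁ m - 1 := by
      intro m hm1 hm2
      have h3 := Nat.find_min hex hm2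
      push_neg at h3
      have h4 := s1 m (by omega)
      have h5 := h3 hm1 (by omega)
      omega
    have hdesc : ∀ m, m ≤ p → y₁ m = y₁ 0 - m := by
      intro m hmp
      induction m with
      | zero => simp
      | succ m ih =>
        have h4 : y₁ (m + 1) = y₁ m - 1 := by
          rcases Nat.eq_zero_or_pos m with h5 | h5
          · subst h5
            norm_num
            omega
          · exact hmin m h5 (by omega)
        have h6 := ih (by omega)
        push_cast
        omega
    have hyp : y₁ p = y₁ 0 - p := hdesc p le_rfl
    have hym : y₁ (p - 1) = y₁ 0 - ((p : ℤ) - 1) := by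
      have := hdesc (p - 1) (by omega)
      omega
    have huc : UpperCorner y₁ p := by
      constructor
      · omega
      · exact hpstep
    have hlb : ∀ m, 1 ≤ m → m ≤ 2 * n → y₂ 1 - ((m : ℤ) - 1) ≤ y₂ m := lb_run s2
    obtain ⟨s, hs0, hs2n, hus, hEq⟩ := transfer_upper ha₁ hm hp0 hp2n huc
    rw [Prod.mk.injEq] at hEq
    obtain ⟨hb, hv⟩ := hEq
    rcases bar_eq_bar hp0 hp2n hs0 hs2n hb.symm with h3 | h3
    · subst h3
      have h4 := hlb p (by omega) (by omega)
      split_ifs at hv <;> omega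
    · subst h3
      rcases lt_trichotomy p n with hc | hc | hc
      · have hadm := ha₂ p (by omega) (by omega)
        have h4 := hlb p (by omega) (by omega)
        split_ifs at hv <;> omega
      · have hnp : 2 * n - p = p := by omega
        rw [hnp] at hv
        have h4 := hlb p (by omega) (by omega)
        split_ifs at hv <;> omega
      · have h4 := hlb (2 * n - p) (by omega) (by omega)
        split_ifs at hv <;> omega
  · -- 2 ≤ r₀
    set p := r₀ - 1 with hp
    have hp1 : 0 < p := by omega
    have hp2 : p < 2 * n := by omega
    have hpr : p + 1 = r₀ := by omega
    have hagp : y₁ p = y₂ p := hagree p (by omega)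
    have hagp' : y₁ (p - 1) = y₂ (p - 1) := hagree (p - 1) (by omega)
    have hstep := s1 (p - 1) (by omega)
    have hpp : p - 1 + 1 = p := by omega
    rw [hpp] at hstep
    rcases hstep with hσ | hσ
    · -- the common step into p is ascending: y₁ has a lower corner at p
      have hlc : LowerCorner y₁ p := by
        constructor
        · omega
        · rw [hpr]; omega
      obtain ⟨s, hs0, hs2n, hls, hEq⟩ := transfer_lower ha₁ hm hp1 hp2 hlc
      rw [Prod.mk.injEq] at hEq
      obtain ⟨hb, hv⟩ := hEq
      rcases bar_eq_bar hp1 hp2 hs0 hs2n hb.symm with h3 | h3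
      · subst h3
        have h4 := hls.2
        rw [hpr] at h4
        omega
      · subst h3
        rcases lt_trichotomy p n with hc | hc | hc
        · have hadm := ha₂ p (by omega) (by omega)
          split_ifs at hv <;> omega
        · have hnp : 2 * n - p = p := by omega
          rw [hnp] at hls
          have h4 := hls.2
          rw [hpr] at h4
          omega
        · have hadm := ha₂ (2 * n - p) (by omega) (by omega)
          have he : 2 * n - (2 * n - p) = p := by omega
          rw [he] at hadm
          split_ifs at hv <;> omega
    · -- the common step into p is descending: y₂ has an upper corner at p
      have huc : UpperCorner y₂ p := by
        constructor
        · omega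
        · rw [hpr]; omega
      obtain ⟨s, hs0, hs2n, hus, hEq⟩ := transfer_upper ha₂ hm.symm hp1 hp2 huc
      rw [Prod.mk.injEq] at hEq
      obtain ⟨hb, hv⟩ := hEq
      rcases bar_eq_bar hp1 hp2 hs0 hs2n hb.symm with h3 | h3
      · subst h3
        have h4 := hus.2
        rw [hpr] at h4
        omega
      · subst h3
        rcases lt_trichotomy p n with hc | hc | hc
        · have hadm := ha₁ p (by omega) (by omega)
          split_ifs at hv <;> omega
        · have hnp : 2 * n - p = p := by omega
          rw [hnp] at hus
          have h4 := hus.2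
          rw [hpr] at h4
          omega
        · have hadm := ha₁ (2 * n - p) (by omega) (by omega)
          have he : 2 * n - (2 * n - p) = p := by omega
          rw [he] at hadm
          split_ifs at hv <;> omega

/-- The monomial map restricted to admissible paths is injective. -/
theorem stmt10 (n i : ℕ) (k : ℤ) (hn : 1 ≤ n) (hi1 : 1 ≤ i) (hi : i ≤ n)
    (hpar : Odd ((i : ℤ) - k)) (y₁ y₂ : ℕ → ℤ)
    (h₁ : IsPath n i k y₁) (ha₁ : IsAdmissible n y₁)
    (h₂ : IsPath n i k y₂) (ha₂ : IsAdmissible n y₂)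
    (hm : mon n y₁ = mon n y₂) :
    ∀ r, r ≤ 2 * n → y₁ r = y₂ r := by
  classical
  by_contra hcon
  push_neg at hcon
  have hex : ∃ r, r ≤ 2 * n ∧ y₁ r ≠ y₂ r := hcon
  set r₀ := Nat.find hex with hr
  obtain ⟨hr2n, hrne⟩ := Nat.find_spec hex
  rw [← hr] at hr2n hrne
  have hagree : ∀ m, m < r₀ → y₁ m = y₂ m := by
    intro m hmlt
    have := Nat.find_min hex hmlt
    push_neg at this
    exact this (by omega)
  have h0 : 0 < r₀ := by
    rcases Nat.eq_zero_or_pos r₀ with h | h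
    · exfalso; apply hrne; rw [h, h₁.1, h₂.1]

    · exact h
  have hN : r₀ < 2 * n := by
    rcases eq_or_lt_of_le hr2n with h | h
    · exfalso; apply hrne; rw [h, h₁.2.1, h₂.2.1]
    · exact h
  have hs1 := h₁.2.2 (r₀ - 1) (by omega)
  have hs2 := h₂.2.2 (r₀ - 1) (by omega)
  have hrr : r₀ - 1 + 1 = r₀ := by omega
  rw [hrr] at hs1 hs2
  have hagp : y₁ (r₀ - 1) = y₂ (r₀ - 1) := hagree _ (by omega)
  rcases hs1 with h1 | h1 <;> rcases hs2 with h2 | h2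
  · exact hrne (by omega)
  · exact key n i k hn hi y₂ y₁ h₂ ha₂ h₁ ha₁ hm.symm r₀ h0 hN
      (fun m hmm => (hagree m hmm).symm) (by omega) (by omega)
  · exact key n i k hn hi y₁ y₂ h₁ ha₁ h₂ ha₂ hm r₀ h0 hN hagree (by omega) (by omega)
  · exact hrne (by omega)
end

section
/- For a fixed j ∈ I, every j-connected component of \bar{P}_{i,k} (the equivalence classes under moves that flip corners at positions r with \bar{r} = j, staying within admissible paths) contains at most 4 paths. -/
/-- One raising/lowering move at a position `r` with `\bar r = j`, between
admissible paths of `𝒫_{i,k}`. -/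
def MoveStep (n i : ℕ) (k : ℤ) (j : ℕ) (p q : ℕ → ℤ) : Prop :=
  IsPath n i k p ∧ IsAdmissible n p ∧ IsPath n i k q ∧ IsAdmissible n q ∧
  ∃ r, 0 < r ∧ r < 2 * n ∧ bar n r = j ∧
    ((UpperCorner p r ∧ q = Function.update p r (p r + 2)) ∨
     (LowerCorner p r ∧ q = Function.update p r (p r - 2)))

/-- The four candidate paths in a `j`-component. -/
def Fq (n j : ℕ) (p : ℕ → ℤ) (ε δ : ℤ) : ℕ → ℤ :=
  Function.update (Function.update p j (p (j - 1) + ε)) (2 * n - j)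
    (p (2 * n - j - 1) + δ)

lemma reach_agree (n i j : ℕ) (k : ℤ) (p q : ℕ → ℤ)
    (h : Relation.ReflTransGen (MoveStep n i k j) p q) (hj1 : 1 ≤ j) (hj : j ≤ n) :
    ∀ r, r ≠ j → r ≠ 2 * n - j → q r = p r := by
  induction h with
  | refl => intro r _ _; rfl
  | tail hbc step ih =>
    intro r hr1 hr2
    obtain ⟨_, _, _, _, s, hs0, hs2, hbar, hcase⟩ := step
    have hs : s = j ∨ s = 2 * n - j := by
      unfold bar at hbar; omega
    have hrs : r ≠ s := by rcases hs with h | h <;> omega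
    rcases hcase with ⟨_, hq⟩ | ⟨_, hq⟩ <;>
      · rw [hq, Function.update_of_ne hrs]; exact ih r hr1 hr2

lemma reach_path (n i j : ℕ) (k : ℤ) (p q : ℕ → ℤ) (hp : IsPath n i k p)
    (h : Relation.ReflTransGen (MoveStep n i k j) p q) : IsPath n i k q := by
  induction h with
  | refl => exact hp
  | tail _ step _ => exact step.2.2.1

/-- Every `j`-connected component of the admissible paths contains at most
four paths. -/
theorem stmt11 (n i j : ℕ) (k : ℤ) (hn : 1 ≤ n) (hi : i ≤ 2 * n)
    (hj1 : 1 ≤ j) (hj : j ≤ n) (hpar : Odd ((i : ℤ) - k))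
    (p : ℕ → ℤ) (hp : IsPath n i k p) (ha : IsAdmissible n p) :
    Set.ncard {q | Relation.ReflTransGen (MoveStep n i k j) p q} ≤ 4 := by
  have hsub : {q | Relation.ReflTransGen (MoveStep n i k j) p q} ⊆
      {Fq n j p 1 1, Fq n j p 1 (-1), Fq n j p (-1) 1, Fq n j p (-1) (-1)} := by
    intro q hq
    have hpath := reach_path n i j k p q hp hq
    have hagree := reach_agree n i j k p q hq hj1 hj
    -- q at position j
    have h1 : q j - p (j - 1) = 1 ∨ q j - p (j - 1) = -1 := by
      have hlt : j - 1 < 2 * n := by omega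
      have := hpath.2.2 (j - 1) hlt
      have hjj : j - 1 + 1 = j := by omega
      rw [hjj] at this
      have heq : q (j - 1) = p (j - 1) := hagree (j - 1) (by omega) (by omega)
      rw [heq] at this
      exact this
    have h2 : q (2 * n - j) - p (2 * n - j - 1) = 1 ∨
        q (2 * n - j) - p (2 * n - j - 1) = -1 := by
      have hlt : 2 * n - j - 1 < 2 * n := by omega
      have := hpath.2.2 (2 * n - j - 1) hlt
      have hjj : 2 * n - j - 1 + 1 = 2 * n - j := by omega
      rw [hjj] at this
      have heq : q (2 * n - j - 1) = p (2 * n - j - 1) :=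
        hagree (2 * n - j - 1) (by omega) (by omega)
      rw [heq] at this
      exact this
    have key : ∀ ε δ : ℤ, q j = p (j - 1) + ε → q (2 * n - j) = p (2 * n - j - 1) + δ →
        q = Fq n j p ε δ := by
      intro ε δ he hd
      funext x
      unfold Fq
      by_cases hx2 : x = 2 * n - j
      · subst hx2; rw [Function.update_self]; exact hd
      · rw [Function.update_of_ne hx2]
        by_cases hx1 : x = j
        · subst hx1; rw [Function.update_self]; exact he
        · rw [Function.update_of_ne hx1]; exact hagree x hx1 hx2
    rcases h1 with h1 | h1 <;> rcases h2 with h2 | h2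
    · exact Or.inl (key 1 1 (by linarith) (by linarith))
    · exact Or.inr (Or.inl (key 1 (-1) (by linarith) (by linarith)))
    · exact Or.inr (Or.inr (Or.inl (key (-1) 1 (by linarith) (by linarith))))
    · exact Or.inr (Or.inr (Or.inr (key (-1) (-1) (by linarith) (by linarith))))
  have hfin : ({Fq n j p 1 1, Fq n j p 1 (-1), Fq n j p (-1) 1,
      Fq n j p (-1) (-1)} : Set (ℕ → ℤ)).Finite := Set.toFinite _
  refine le_trans (Set.ncard_le_ncard hsub hfin) ?_
  have h1 := Set.ncard_insert_le (Fq n j p 1 1)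
    ({Fq n j p 1 (-1), Fq n j p (-1) 1, Fq n j p (-1) (-1)} : Set (ℕ → ℤ))
  have h2 := Set.ncard_insert_le (Fq n j p 1 (-1))
    ({Fq n j p (-1) 1, Fq n j p (-1) (-1)} : Set (ℕ → ℤ))
  have h3 := Set.ncard_insert_le (Fq n j p (-1) 1)
    ({Fq n j p (-1) (-1)} : Set (ℕ → ℤ))
  have h4 := Set.ncard_singleton (Fq n j p (-1) (-1))
  omega
end

section
/- If p ∈ \bar{P}_{i,k} has an upper corner at position r > n (i.e., at (r, ℓ) with n < r ≤ N-1), then the path obtained by the lowering move at r (replacing y_r by y_r + 2) is again admissible. -/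
/-- If an admissible path has an upper corner at a position `r > n`, then the
path obtained by the lowering move at `r` is again admissible. -/
theorem stmt14 (n i : ℕ) (k : ℤ) (hn : 1 ≤ n) (hi : i ≤ 2 * n)
    (hpar : Odd ((i : ℤ) - k)) (y : ℕ → ℤ)
    (hy : IsPath n i k y) (ha : IsAdmissible n y)
    (r : ℕ) (hr1 : n < r) (hr2 : r < 2 * n) (hu : UpperCorner y r) :
    IsPath n i k (Function.update y r (y r + 2)) ∧
      IsAdmissible n (Function.update y r (y r + 2)) := by
  obtain ⟨h0, hN, hstep⟩ := hy
  have hr0 : r ≠ 0 := by omega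
  have hrN : 2 * n ≠ r := by omega
  constructor
  · refine ⟨?_, ?_, ?_⟩
    · rw [Function.update_of_ne (Ne.symm hr0)]; exact h0
    · rw [Function.update_of_ne hrN]; exact hN
    · intro s hs
      rcases eq_or_ne (s + 1) r with h1 | h1
      · have hs' : s ≠ r := by omega
        have hse : s = r - 1 := by omega
        rw [Function.update_of_ne hs', h1, Function.update_self, hse]
        have h3 := hu.1
        left; omega
      · rcases eq_or_ne s r with h2 | h2
        · subst h2
          rw [Function.update_of_ne h1, Function.update_self]
          have := hu.2
          right; omega
        · rw [Function.update_of_ne h1, Function.update_of_ne h2]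
          exact hstep s hs
  · intro s hs1 hs2
    have hs' : s ≠ r := by omega
    rw [Function.update_of_ne hs']
    rcases eq_or_ne (2 * n - s) r with h | h
    · rw [h, Function.update_self, ← h]
      have := ha s hs1 hs2
      omega
    · rw [Function.update_of_ne h]
      exact ha s hs1 hs2
end

section
/- For j ∈ I with j < n, if an admissible path p ∈ \bar{P}_{i,k} has an upper corner at (j, ℓ_1) with j < n and a lower corner at (N-j, ℓ_2), then ℓ_1 + 2 ≤ ℓ_2; if instead p has a lower corner at (j, ℓ_2') and an upper corner at (N-j, ℓ_1'), then ℓ_2' ≤ ℓ_1'. -/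
/-- For `j < n`: an upper corner at `(j, ℓ₁)` together with a lower corner at
`(N-j, ℓ₂)` forces `ℓ₁ + 2 ≤ ℓ₂`; a lower corner at `(j, ℓ₂')` together with an
upper corner at `(N-j, ℓ₁')` forces `ℓ₂' ≤ ℓ₁'`. -/
theorem stmt18 (n i : ℕ) (k : ℤ) (hn : 1 ≤ n) (hi : i ≤ 2 * n)
    (hpar : Odd ((i : ℤ) - k)) (y : ℕ → ℤ)
    (hy : IsPath n i k y) (ha : IsAdmissible n y)
    (j : ℕ) (hj0 : 0 < j) (hj : j < n) :
    (UpperCorner y j → LowerCorner y (2 * n - j) → y j + 2 ≤ y (2 * n - j)) ∧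
    (LowerCorner y j → UpperCorner y (2 * n - j) → y j ≤ y (2 * n - j)) := by
  constructor
  · intro hu hl
    have h1 := ha (j + 1) (by omega) (by omega)
    have he : 2 * n - (j + 1) = (2 * n - j) - 1 := by omega
    rw [he] at h1
    have h2 := hu.2
    have h3 := hl.1
    omega
  · intro _ _
    exact ha j hj0 (le_of_lt hj)
end
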